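/- There exists a constant C > 0 with the following property. Let d ≥ 0, T > 0, M > 0, and let v, w, B, B* : ℝ × ℝ³ → ℝ³ be smooth and vanish for ‖x‖ ≥ R (some R > 0). Assume that for every t ∈ [0, T]: div v(t,·) = 0, div B*(t,·) = 0, w = curl v, B* = B + curl(curl B), and the vorticity formulation holds pointwise: ∂ₜw + (v·∇)w + ((curl B)·∇)B* = (B*·∇)(curl B) + (w·∇)v and ∂ₜB* + ((v − d·curl B)·∇)B* + ((curl B)·∇)w = −d·(B*·∇)(curl B) + (w·∇)(curl B) + (B*·∇)v. Assume moreover that on [0, T] × ℝ³ all of ‖w‖, ‖B*‖, |∂ᵢvⱼ| and |∂ᵢ(curl B)ⱼ| (i, j ∈ {1,2,3}) are bounded by M. Then for all t ∈ [0, T]: ∫_{ℝ³} (‖w(t,x)‖² + ‖B*(t,x)‖²) dx ≤ e^{C·(1+d)·M·t} · ∫_{ℝ³} (‖w(0,x)‖² + ‖B*(0,x)‖²) dx. -/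

import Mathlib

noncomputable section

open MeasureTheory Real

/-- Euclidean 3-space. -/
abbrev E3 : Type := EuclideanSpace ℝ (Fin 3)

/-- Build a vector in `E3` from three coordinates. -/
def mk3 (a b c : ℝ) : E3 := (WithLp.equiv 2 (Fin 3 → ℝ)).symm ![a, b, c]

/-- Partial derivative in the `i`-th coordinate direction. -/
def pd (i : Fin 3) (f : E3 → ℝ) (x : E3) : ℝ :=
  fderiv ℝ f x (EuclideanSpace.single i 1)

/-- Curl of a vector field on `ℝ³`. -/
def ecurl (f : E3 → E3) (x : E3) : E3 :=
  mk3 (pd 1 (fun y => f y 2) x - pd 2 (fun y => f y 1) x)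
      (pd 2 (fun y => f y 0) x - pd 0 (fun y => f y 2) x)
      (pd 0 (fun y => f y 1) x - pd 1 (fun y => f y 0) x)

/-- Divergence of a vector field on `ℝ³`. -/
def ediv (f : E3 → E3) (x : E3) : ℝ :=
  pd 0 (fun y => f y 0) x + pd 1 (fun y => f y 1) x + pd 2 (fun y => f y 2) x

/-- Gradient of a scalar field on `ℝ³`. -/
def egrad (h : E3 → ℝ) (x : E3) : E3 :=
  mk3 (pd 0 h x) (pd 1 h x) (pd 2 h x)

/-- Cross product on `ℝ³`. -/
def cross3 (u w : E3) : E3 :=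
  mk3 (u 1 * w 2 - u 2 * w 1) (u 2 * w 0 - u 0 * w 2) (u 0 * w 1 - u 1 * w 0)

/-- Advection `(g · ∇) f` of a vector field `f` along the vector `g`. -/
def advect (g : E3) (f : E3 → E3) (x : E3) : E3 :=
  mk3 (∑ j, g j * pd j (fun y => f y 0) x)
      (∑ j, g j * pd j (fun y => f y 1) x)
      (∑ j, g j * pd j (fun y => f y 2) x)

/-- Componentwise Laplacian of a vector field on `ℝ³`. -/
def elap (f : E3 → E3) (x : E3) : E3 :=
  mk3 (∑ i, pd i (fun y => pd i (fun z => f z 0) y) x)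
      (∑ i, pd i (fun y => pd i (fun z => f z 1) y) x)
      (∑ i, pd i (fun y => pd i (fun z => f z 2) y) x)

/-- Time derivative of a time-dependent vector field. -/
def tderiv (f : ℝ → E3 → E3) (t : ℝ) (x : E3) : E3 :=
  deriv (fun s => f s x) t

-- component application lemmas for E3 arithmetic

lemma pd_eq_of_hasFDerivAt {f : E3 → ℝ} {L : E3 →L[ℝ] ℝ} {x : E3} (h : HasFDerivAt f L x)
    (i : Fin 3) : pd i f x = L (EuclideanSpace.single i 1) := by
  rw [pd, h.fderiv]

-- continuity of pd for smooth f

lemma contDiff_pd {f : E3 → ℝ} (hf : ContDiff ℝ (⊤ : ℕ∞) f) (i : Fin 3) :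
    ContDiff ℝ (⊤ : ℕ∞) (fun x => pd i f x) := by
  exact (ContinuousLinearMap.apply ℝ ℝ (EuclideanSpace.single i 1)).contDiff.comp
    (hf.fderiv_right (m := (⊤ : ℕ∞)) (by simp))

lemma integral_pd_eq_zero {f : E3 → ℝ} (hf : ContDiff ℝ (⊤ : ℕ∞) f) (hsupp : HasCompactSupport f)
    (i : Fin 3) : ∫ x : E3, pd i f x = 0 := by
  have hint : Integrable (fun x : E3 => pd i f x) := by
    refine (Continuous.integrable_of_hasCompactSupport (contDiff_pd hf i).continuous ?_)
    have : HasCompactSupport (fderiv ℝ f) := hsupp.fderiv (𝕜 := ℝ)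
    have h2 : HasCompactSupport (fun x => (fderiv ℝ f x) (EuclideanSpace.single i 1)) :=
      this.comp_left (g := fun L : E3 →L[ℝ] ℝ => L (EuclideanSpace.single i 1)) rfl
    exact h2
  have h := integral_mul_fderiv_eq_neg_fderiv_mul_of_integrable (μ := volume)
    (f := fun _ : E3 => (1:ℝ)) (g := f) (v := EuclideanSpace.single i 1)
    ?_ ?_ ?_ (fun x _ => differentiableAt_const (1:ℝ)) (fun x _ => hf.differentiable (by simp) x)
  · simpa [pd] using h
  · simp
  · simpa [pd] using hint
  · simpa using hf.continuous.integrable_of_hasCompactSupport hsupp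

lemma pd_mul {a b : E3 → ℝ} {x : E3} (ha : DifferentiableAt ℝ a x) (hb : DifferentiableAt ℝ b x)
    (j : Fin 3) : pd j (fun y => a y * b y) x = pd j a x * b x + a x * pd j b x := by
  rw [pd, fderiv_fun_mul ha hb]
  simp [pd]; ring

lemma pd_add {a b : E3 → ℝ} {x : E3} (ha : DifferentiableAt ℝ a x) (hb : DifferentiableAt ℝ b x)
    (j : Fin 3) : pd j (fun y => a y + b y) x = pd j a x + pd j b x := by
  rw [pd, fderiv_fun_add ha hb]; simp [pd]

lemma pd_sub {a b : E3 → ℝ} {x : E3} (ha : DifferentiableAt ℝ a x) (hb : DifferentiableAt ℝ b x)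
    (j : Fin 3) : pd j (fun y => a y - b y) x = pd j a x - pd j b x := by
  rw [pd, fderiv_fun_sub ha hb]; simp [pd]

lemma pd_const_mul {b : E3 → ℝ} {x : E3} (c : ℝ) (hb : DifferentiableAt ℝ b x)
    (j : Fin 3) : pd j (fun y => c * b y) x = c * pd j b x := by
  rw [pd, fderiv_const_mul hb]; simp [pd]

lemma hasCompactSupport_of_ball {f : E3 → ℝ} {R : ℝ} (h : ∀ y : E3, R ≤ ‖y‖ → f y = 0) :
    HasCompactSupport f := by
  apply HasCompactSupport.intro (isCompact_closedBall (0:E3) R)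
  intro x hx
  simp only [Metric.mem_closedBall, dist_zero_right, not_le] at hx
  exact h x hx.le

lemma integral_div_free {g : E3 → E3} {φ : E3 → ℝ} {R : ℝ}
    (hg : ∀ k : Fin 3, ContDiff ℝ (⊤ : ℕ∞) (fun y => g y k))
    (hφ : ContDiff ℝ (⊤ : ℕ∞) φ) (hφs : ∀ y : E3, R ≤ ‖y‖ → φ y = 0)
    (hdiv : ∀ y, ediv g y = 0) :
    ∫ y : E3, ∑ j : Fin 3, g y j * pd j φ y = 0 := by
  have hφd := hφ.differentiable (by simp)
  have hgd : ∀ (k : Fin 3), Differentiable ℝ (fun y => g y k) :=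
    fun k => (hg k).differentiable (by simp)
  have hh : ∀ j : Fin 3, ContDiff ℝ (⊤ : ℕ∞) (fun y => g y j * φ y) := fun j => (hg j).mul hφ
  have hhs : ∀ j : Fin 3, HasCompactSupport (fun y => g y j * φ y) := by
    intro j
    exact hasCompactSupport_of_ball (R := R) (fun y hy => by simp [hφs y hy])
  have key : ∀ y : E3, ∑ j : Fin 3, g y j * pd j φ y
      = ∑ j : Fin 3, pd j (fun z => g z j * φ z) y := by
    intro y
    have e : ∀ j : Fin 3, pd j (fun z => g z j * φ z) y
        = pd j (fun z => g z j) y * φ y + g y j * pd j φ y :=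
      fun j => pd_mul (hgd j y) (hφd y) j
    have : ∑ j : Fin 3, pd j (fun z => g z j * φ z) y
        = (ediv g y) * φ y + ∑ j : Fin 3, g y j * pd j φ y := by
      simp only [e, Fin.sum_univ_three, ediv]; ring
    rw [this, hdiv y]; ring
  rw [integral_congr_ae (Filter.Eventually.of_forall key)]
  have hint : ∀ j : Fin 3, Integrable (fun y : E3 => pd j (fun z => g z j * φ z) y) := by
    intro j
    refine (contDiff_pd (hh j) j).continuous.integrable_of_hasCompactSupport ?_
    have := ((hhs j).fderiv (𝕜 := ℝ))
    exact this.comp_left (g := fun L : E3 →L[ℝ] ℝ => L (EuclideanSpace.single j 1)) rfl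
  rw [integral_finset_sum _ (fun j _ => hint j)]
  refine Finset.sum_eq_zero (fun j _ => integral_pd_eq_zero (hh j) (hhs j) j)

lemma pd_pd_symm {f : E3 → ℝ} (hf : ContDiff ℝ (⊤ : ℕ∞) f) (a b : Fin 3) (x : E3) :
    pd a (fun y => pd b f y) x = pd b (fun y => pd a f y) x := by
  set f' : E3 → E3 →L[ℝ] ℝ := fderiv ℝ f with hf'def
  have hf'd : Differentiable ℝ f' := (hf.fderiv_right (m := 1) (WithTop.coe_le_coe.2 le_top)).differentiable one_ne_zero
  have hx : HasFDerivAt f' (fderiv ℝ f' x) x := (hf'd x).hasFDerivAt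
  have hps : ∀ c d : Fin 3, pd c (fun y => pd d f y) x
      = fderiv ℝ f' x (EuclideanSpace.single c 1) (EuclideanSpace.single d 1) := by
    intro c d
    have h1' := ((ContinuousLinearMap.apply ℝ ℝ (EuclideanSpace.single d 1)).hasFDerivAt
        (x := f' x)).comp x hx
    have h1 : HasFDerivAt (fun y => f' y (EuclideanSpace.single d 1))
        ((ContinuousLinearMap.apply ℝ ℝ (EuclideanSpace.single d 1)).comp (fderiv ℝ f' x)) x := h1'
    have := pd_eq_of_hasFDerivAt h1 c
    simpa [pd] using this
  rw [hps a b, hps b a]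
  exact second_derivative_symmetric
    (fun y => (hf.differentiable (by simp) y).hasFDerivAt) hx _ _

lemma ediv_ecurl_eq_zero {f : E3 → E3} (hf : ∀ k : Fin 3, ContDiff ℝ (⊤ : ℕ∞) (fun y => f y k))
    (x : E3) : ediv (ecurl f) x = 0 := by
  have hd : ∀ (j k : Fin 3), Differentiable ℝ (fun y => pd j (fun z => f z k) y) :=
    fun j k => (contDiff_pd (hf k) j).differentiable (by simp)
  have h0 : ecurl f = fun y => mk3
      (pd 1 (fun z => f z 2) y - pd 2 (fun z => f z 1) y)
      (pd 2 (fun z => f z 0) y - pd 0 (fun z => f z 2) y)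
      (pd 0 (fun z => f z 1) y - pd 1 (fun z => f z 0) y) := rfl
  have c0 : (fun y => ecurl f y 0) = fun y => pd 1 (fun z => f z 2) y - pd 2 (fun z => f z 1) y := rfl
  have c1 : (fun y => ecurl f y 1) = fun y => pd 2 (fun z => f z 0) y - pd 0 (fun z => f z 2) y := rfl
  have c2 : (fun y => ecurl f y 2) = fun y => pd 0 (fun z => f z 1) y - pd 1 (fun z => f z 0) y := rfl
  rw [ediv, c0, c1, c2, pd_sub (hd 1 2 x) (hd 2 1 x), pd_sub (hd 2 0 x) (hd 0 2 x),
    pd_sub (hd 0 1 x) (hd 1 0 x), pd_pd_symm (hf 2) 0 1, pd_pd_symm (hf 1) 0 2,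
    pd_pd_symm (hf 0) 1 2]
  ring

lemma pd_zero_of_zero_nhds {φ : E3 → ℝ} {R : ℝ} (hφ : ∀ y : E3, R ≤ ‖y‖ → φ y = 0)
    (j : Fin 3) {x : E3} (hx : R < ‖x‖) : pd j φ x = 0 := by
  have ho : IsOpen {y : E3 | R < ‖y‖} := isOpen_lt continuous_const continuous_norm
  have hev : φ =ᶠ[nhds x] (fun _ => (0:ℝ)) := by
    filter_upwards [ho.mem_nhds hx] with y hy using hφ y (le_of_lt hy)
  rw [pd, hev.fderiv_eq]
  simp

lemma tri_bound {M : ℝ} (hM : 0 ≤ M) (a b : E3) (f : E3 → E3) (x : E3)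
    (hc : ∀ (j k : Fin 3), |pd j (fun y => f y k) x| ≤ M) :
    |∑ k : Fin 3, a k * ∑ j : Fin 3, b j * pd j (fun y => f y k) x| ≤
      (3/2) * M * ((a 0 * a 0 + a 1 * a 1 + a 2 * a 2) + (b 0 * b 0 + b 1 * b 1 + b 2 * b 2)) := by
  have key : ∀ p q r : ℝ, |r| ≤ M → p * (q * r) ≤ M * (p * p) / 2 + M * (q * q) / 2 := by
    intro p q r hr
    have h1 : p * (q * r) ≤ |p * q| * M := by
      calc p * (q * r) ≤ |p * (q * r)| := le_abs_self _
        _ = |p * q| * |r| := by rw [abs_mul, abs_mul, abs_mul]; ring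
        _ ≤ |p * q| * M := mul_le_mul_of_nonneg_left hr (abs_nonneg _)
    have h2 : |p * q| * M ≤ M * (p * p) / 2 + M * (q * q) / 2 := by
      have h3 : 2 * |p * q| ≤ p * p + q * q := by
        nlinarith [sq_nonneg (|p| - |q|), sq_abs p, sq_abs q, abs_mul p q, abs_nonneg (p*q)]
      nlinarith [abs_nonneg (p * q)]
    linarith
  simp only [Fin.sum_univ_three]
  rw [abs_le]
  constructor
  · linarith [key (-(a 0)) (b 0) (pd 0 (fun y => f y 0) x) (hc 0 0),
      key (-(a 0)) (b 1) (pd 1 (fun y => f y 0) x) (hc 1 0),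
      key (-(a 0)) (b 2) (pd 2 (fun y => f y 0) x) (hc 2 0),
      key (-(a 1)) (b 0) (pd 0 (fun y => f y 1) x) (hc 0 1),
      key (-(a 1)) (b 1) (pd 1 (fun y => f y 1) x) (hc 1 1),
      key (-(a 1)) (b 2) (pd 2 (fun y => f y 1) x) (hc 2 1),
      key (-(a 2)) (b 0) (pd 0 (fun y => f y 2) x) (hc 0 2),
      key (-(a 2)) (b 1) (pd 1 (fun y => f y 2) x) (hc 1 2),
      key (-(a 2)) (b 2) (pd 2 (fun y => f y 2) x) (hc 2 2)]
  · linarith [key (a 0) (b 0) (pd 0 (fun y => f y 0) x) (hc 0 0),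
      key (a 0) (b 1) (pd 1 (fun y => f y 0) x) (hc 1 0),
      key (a 0) (b 2) (pd 2 (fun y => f y 0) x) (hc 2 0),
      key (a 1) (b 0) (pd 0 (fun y => f y 1) x) (hc 0 1),
      key (a 1) (b 1) (pd 1 (fun y => f y 1) x) (hc 1 1),
      key (a 1) (b 2) (pd 2 (fun y => f y 1) x) (hc 2 1),
      key (a 2) (b 0) (pd 0 (fun y => f y 2) x) (hc 0 2),
      key (a 2) (b 1) (pd 1 (fun y => f y 2) x) (hc 1 2),
      key (a 2) (b 2) (pd 2 (fun y => f y 2) x) (hc 2 2)]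

lemma continuous_triSum {a b f : E3 → E3}
    (ha : ∀ k : Fin 3, ContDiff ℝ (⊤ : ℕ∞) (fun y => a y k))
    (hb : ∀ k : Fin 3, ContDiff ℝ (⊤ : ℕ∞) (fun y => b y k))
    (hf : ∀ k : Fin 3, ContDiff ℝ (⊤ : ℕ∞) (fun y => f y k)) :
    Continuous (fun x : E3 => ∑ k : Fin 3, a x k * ∑ j : Fin 3, b x j * pd j (fun y => f y k) x) := by
  refine continuous_finset_sum _ (fun k _ => ((ha k).continuous).mul
    (continuous_finset_sum _ (fun j _ => ((hb j).continuous).mul (contDiff_pd (hf k) j).continuous)))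

/-- energy density -/
def Efn (w Bs : ℝ → E3 → E3) : ℝ × E3 → ℝ := fun p =>
  (w p.1 p.2 0 * w p.1 p.2 0 + w p.1 p.2 1 * w p.1 p.2 1 + w p.1 p.2 2 * w p.1 p.2 2)
  + (Bs p.1 p.2 0 * Bs p.1 p.2 0 + Bs p.1 p.2 1 * Bs p.1 p.2 1 + Bs p.1 p.2 2 * Bs p.1 p.2 2)

/-- `L²` energy estimate for the vorticity formulation of incompressible
extended MHD: there is a universal constant `C > 0` such that, under the stated bounds,
`∫ (‖w(t)‖² + ‖B*(t)‖²) ≤ e^{C(1+d)Mt} ∫ (‖w(0)‖² + ‖B*(0)‖²)` on `[0, T]`. -/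
theorem vorticity_formulation_L2_estimate :
    ∃ C : ℝ, 0 < C ∧
      ∀ (d T M R : ℝ), 0 ≤ d → 0 < T → 0 < M → 0 < R →
      ∀ (v w B Bs : ℝ → E3 → E3),
      ContDiff ℝ (⊤ : ℕ∞) ↿v → ContDiff ℝ (⊤ : ℕ∞) ↿w → ContDiff ℝ (⊤ : ℕ∞) ↿B → ContDiff ℝ (⊤ : ℕ∞) ↿Bs →
      (∀ t x, R ≤ ‖x‖ → v t x = 0 ∧ w t x = 0 ∧ B t x = 0 ∧ Bs t x = 0) →
      (∀ t ∈ Set.Icc (0:ℝ) T, ∀ x, ediv (v t) x = 0) →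
      (∀ t ∈ Set.Icc (0:ℝ) T, ∀ x, ediv (Bs t) x = 0) →
      (∀ t ∈ Set.Icc (0:ℝ) T, ∀ x, w t x = ecurl (v t) x) →
      (∀ t ∈ Set.Icc (0:ℝ) T, ∀ x, Bs t x = B t x + ecurl (ecurl (B t)) x) →
      (∀ t ∈ Set.Icc (0:ℝ) T, ∀ x,
        tderiv w t x + advect (v t x) (w t) x + advect (ecurl (B t) x) (Bs t) x
          = advect (Bs t x) (ecurl (B t)) x + advect (w t x) (v t) x) →
      (∀ t ∈ Set.Icc (0:ℝ) T, ∀ x,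
        tderiv Bs t x + advect (v t x - d • ecurl (B t) x) (Bs t) x
            + advect (ecurl (B t) x) (w t) x
          = -(d • advect (Bs t x) (ecurl (B t)) x)
            + advect (w t x) (ecurl (B t)) x + advect (Bs t x) (v t) x) →
      (∀ t ∈ Set.Icc (0:ℝ) T, ∀ x,
        ‖w t x‖ ≤ M ∧ ‖Bs t x‖ ≤ M ∧
        ∀ i j : Fin 3, |pd i (fun y => v t y j) x| ≤ M ∧
          |pd i (fun y => ecurl (B t) y j) x| ≤ M) →
      ∀ t ∈ Set.Icc (0:ℝ) T,
        (∫ x : E3, (‖w t x‖^2 + ‖Bs t x‖^2))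
          ≤ Real.exp (C * (1 + d) * M * t) * ∫ x : E3, (‖w 0 x‖^2 + ‖Bs 0 x‖^2) := by
  refine ⟨100, by norm_num, ?_⟩
  intro d T M R hd hT hM hR v w B Bs hv hw hB hBs hsupp hdivv hdivBs hwcurl hBsdef heq1 heq2 hbd t ht
  set K : ℝ := 100 * (1 + d) * M with hK
  -- componentwise smoothness
  have hwj : ∀ k : Fin 3, ContDiff ℝ (⊤ : ℕ∞) (fun p : ℝ × E3 => w p.1 p.2 k) := fun k => by
    exact (EuclideanSpace.proj k : E3 →L[ℝ] ℝ).contDiff.comp hw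
  have hBsj : ∀ k : Fin 3, ContDiff ℝ (⊤ : ℕ∞) (fun p : ℝ × E3 => Bs p.1 p.2 k) := fun k => by
    exact (EuclideanSpace.proj k : E3 →L[ℝ] ℝ).contDiff.comp hBs
  have hwk : ∀ (s : ℝ) (k : Fin 3), ContDiff ℝ (⊤ : ℕ∞) (fun y : E3 => w s y k) := fun s k =>
    (hwj k).comp (contDiff_const.prodMk contDiff_id)
  have hBsk : ∀ (s : ℝ) (k : Fin 3), ContDiff ℝ (⊤ : ℕ∞) (fun y : E3 => Bs s y k) := fun s k =>
    (hBsj k).comp (contDiff_const.prodMk contDiff_id)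
  have hvk : ∀ (s : ℝ) (k : Fin 3), ContDiff ℝ (⊤ : ℕ∞) (fun y : E3 => v s y k) := fun s k => by
    exact (((EuclideanSpace.proj k : E3 →L[ℝ] ℝ).contDiff.comp hv).comp
      (contDiff_const.prodMk contDiff_id))
  have hBk : ∀ (s : ℝ) (k : Fin 3), ContDiff ℝ (⊤ : ℕ∞) (fun y : E3 => B s y k) := fun s k => by
    exact (((EuclideanSpace.proj k : E3 →L[ℝ] ℝ).contDiff.comp hB).comp
      (contDiff_const.prodMk contDiff_id))
  have hcBk : ∀ (s : ℝ) (k : Fin 3), ContDiff ℝ (⊤ : ℕ∞) (fun y : E3 => ecurl (B s) y k) := by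
    intro s k
    fin_cases k
    · exact (contDiff_pd (hBk s 2) 1).sub (contDiff_pd (hBk s 1) 2)
    · exact (contDiff_pd (hBk s 0) 2).sub (contDiff_pd (hBk s 2) 0)
    · exact (contDiff_pd (hBk s 1) 0).sub (contDiff_pd (hBk s 0) 1)
  have hE : ContDiff ℝ (⊤ : ℕ∞) (Efn w Bs) := by
    refine ContDiff.add (ContDiff.add (ContDiff.add ((hwj 0).mul (hwj 0)) ((hwj 1).mul (hwj 1)))
      ((hwj 2).mul (hwj 2))) ?_
    exact ContDiff.add (ContDiff.add ((hBsj 0).mul (hBsj 0)) ((hBsj 1).mul (hBsj 1)))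
      ((hBsj 2).mul (hBsj 2))
  set Fn : ℝ → ℝ := fun s => ∫ x : E3, Efn w Bs (s, x) with hFn
  set G : ℝ → E3 → ℝ := fun s x => fderiv ℝ (Efn w Bs) (s, x) ((1:ℝ), (0:E3)) with hGdef
  have hnorm : ∀ (s : ℝ) (x : E3), ‖w s x‖^2 + ‖Bs s x‖^2 = Efn w Bs (s, x) := by
    intro s x
    rw [EuclideanSpace.norm_eq, EuclideanSpace.norm_eq, Real.sq_sqrt (by positivity),
      Real.sq_sqrt (by positivity)]
    simp [Efn, Fin.sum_univ_three, sq_abs]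
    ring
  have hEzero : ∀ (s : ℝ) (x : E3), R ≤ ‖x‖ → Efn w Bs (s, x) = 0 := by
    intro s x hx
    have h1 := (hsupp s x hx).2.1
    have h2 := (hsupp s x hx).2.2.2
    simp only [Efn, h1, h2]
    norm_num
  have hGd : ∀ (s : ℝ) (x : E3), HasDerivAt (fun u => Efn w Bs (u, x)) (G s x) s := by
    intro s x
    have h1 : HasDerivAt (fun u : ℝ => (u, x)) ((1:ℝ), (0:E3)) s :=
      (hasDerivAt_id s).prodMk (hasDerivAt_const s x)
    exact (((hE.differentiable (by simp)) (s, x)).hasFDerivAt).comp_hasDerivAt s h1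
  have hGzero : ∀ (s : ℝ) (x : E3), R ≤ ‖x‖ → G s x = 0 := by
    intro s x hx
    have h0 : (fun u => Efn w Bs (u, x)) = fun _ => (0:ℝ) := funext fun u => hEzero u x hx
    have h1 := hGd s x
    rw [h0] at h1
    exact h1.unique (hasDerivAt_const s 0)
  have hGcont : Continuous (fun p : ℝ × E3 => G p.1 p.2) := by
    have h1 : Continuous (fun p : ℝ × E3 => fderiv ℝ (Efn w Bs) p) :=
      (hE.fderiv_right (m := (⊤ : ℕ∞)) (by simp)).continuous
    exact h1.clm_apply continuous_const
  have hEcont : ∀ s : ℝ, Continuous (fun x : E3 => Efn w Bs (s, x)) := fun s =>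
    hE.continuous.comp (Continuous.prodMk_right s)
  have hEint : ∀ s : ℝ, Integrable (fun x : E3 => Efn w Bs (s, x)) := fun s =>
    (hEcont s).integrable_of_hasCompactSupport (hasCompactSupport_of_ball (hEzero s))
  have hFd : ∀ s : ℝ, HasDerivAt Fn (∫ x : E3, G s x) s := by
    intro s
    obtain ⟨C0, hC0⟩ := (IsCompact.exists_bound_of_continuousOn
      ((isCompact_Icc (a := s - 1) (b := s + 1)).prod (isCompact_closedBall (0:E3) R))
      hGcont.continuousOn)
    have key := hasDerivAt_integral_of_dominated_loc_of_deriv_le (μ := volume)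
      (F := fun u (x : E3) => Efn w Bs (u, x)) (F' := fun u (x : E3) => G u x)
      (bound := Set.indicator (Metric.closedBall (0:E3) R) (fun _ => C0))
      (x₀ := s) (s := Metric.ball s 1) (Metric.ball_mem_nhds s one_pos)
      (Filter.Eventually.of_forall fun u => (hEcont u).aestronglyMeasurable)
      (hEint s)
      ((hGcont.comp (Continuous.prodMk_right s)).aestronglyMeasurable)
      ?_ ?_ ?_
    · exact key.2
    · refine Filter.Eventually.of_forall fun x => fun u hu => ?_
      by_cases hx : ‖x‖ ≤ R
      · have hmem : x ∈ Metric.closedBall (0:E3) R := by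
          simpa [Metric.mem_closedBall, dist_zero_right] using hx
        rw [Set.indicator_of_mem hmem]
        have hmem2 : ((u, x) : ℝ × E3) ∈ Set.Icc (s-1) (s+1) ×ˢ Metric.closedBall (0:E3) R := by
          constructor
          · have : |u - s| < 1 := by simpa [Real.dist_eq] using hu
            constructor <;> [linarith [abs_lt.mp this |>.1]; linarith [abs_lt.mp this |>.2]]
          · exact hmem
        simpa [Real.norm_eq_abs] using hC0 (u, x) hmem2
      · push_neg at hx
        show ‖G u x‖ ≤ (Metric.closedBall (0:E3) R).indicator (fun _ => C0) x
        rw [hGzero u x hx.le, Set.indicator_of_notMem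
          (by simpa [Metric.mem_closedBall, dist_zero_right] using hx.not_ge)]
        simp
    · rw [integrable_indicator_iff measurableSet_closedBall]
      exact integrableOn_const measure_closedBall_lt_top.ne
    · exact Filter.Eventually.of_forall fun x => fun u _ => hGd u x
  have hkey : ∀ s ∈ Set.Icc (0:ℝ) T, (∫ x : E3, G s x) ≤ K * Fn s := by
    intro s hs
    have dW : ∀ (k : Fin 3) (x : E3), DifferentiableAt ℝ (fun y => w s y k) x :=
      fun k x => ((hwk s k).differentiable (by simp)) x
    have dS : ∀ (k : Fin 3) (x : E3), DifferentiableAt ℝ (fun y => Bs s y k) x :=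
      fun k x => ((hBsk s k).differentiable (by simp)) x
    have hphi1 : ContDiff ℝ (⊤ : ℕ∞) (fun y => w s y 0 * w s y 0 + w s y 1 * w s y 1 + w s y 2 * w s y 2) :=
      (((hwk s 0).mul (hwk s 0)).add ((hwk s 1).mul (hwk s 1))).add ((hwk s 2).mul (hwk s 2))
    have hphi2 : ContDiff ℝ (⊤ : ℕ∞) (fun y => Bs s y 0 * Bs s y 0 + Bs s y 1 * Bs s y 1 + Bs s y 2 * Bs s y 2) :=
      (((hBsk s 0).mul (hBsk s 0)).add ((hBsk s 1).mul (hBsk s 1))).add ((hBsk s 2).mul (hBsk s 2))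
    have hphi3 : ContDiff ℝ (⊤ : ℕ∞) (fun y => 2*(w s y 0 * Bs s y 0) + 2*(w s y 1 * Bs s y 1) + 2*(w s y 2 * Bs s y 2)) :=
      ((contDiff_const.mul ((hwk s 0).mul (hBsk s 0))).add
        (contDiff_const.mul ((hwk s 1).mul (hBsk s 1)))).add
        (contDiff_const.mul ((hwk s 2).mul (hBsk s 2)))
    have p1 : ∀ (j : Fin 3) (x : E3), pd j (fun y => w s y 0 * w s y 0 + w s y 1 * w s y 1 + w s y 2 * w s y 2) x = (pd j (fun y => w s y 0) x * w s x 0 + w s x 0 * pd j (fun y => w s y 0) x) + (pd j (fun y => w s y 1) x * w s x 1 + w s x 1 * pd j (fun y => w s y 1) x) + (pd j (fun y => w s y 2) x * w s x 2 + w s x 2 * pd j (fun y => w s y 2) x) := by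
      intro j x
      rw [pd_add (((dW 0 x).fun_mul (dW 0 x)).fun_add ((dW 1 x).fun_mul (dW 1 x))) ((dW 2 x).fun_mul (dW 2 x)) j,
        pd_add ((dW 0 x).fun_mul (dW 0 x)) ((dW 1 x).fun_mul (dW 1 x)) j,
        pd_mul (dW 0 x) (dW 0 x) j, pd_mul (dW 1 x) (dW 1 x) j, pd_mul (dW 2 x) (dW 2 x) j]
    have p2 : ∀ (j : Fin 3) (x : E3), pd j (fun y => Bs s y 0 * Bs s y 0 + Bs s y 1 * Bs s y 1 + Bs s y 2 * Bs s y 2) x = (pd j (fun y => Bs s y 0) x * Bs s x 0 + Bs s x 0 * pd j (fun y => Bs s y 0) x) + (pd j (fun y => Bs s y 1) x * Bs s x 1 + Bs s x 1 * pd j (fun y => Bs s y 1) x) + (pd j (fun y => Bs s y 2) x * Bs s x 2 + Bs s x 2 * pd j (fun y => Bs s y 2) x) := by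
      intro j x
      rw [pd_add (((dS 0 x).fun_mul (dS 0 x)).fun_add ((dS 1 x).fun_mul (dS 1 x))) ((dS 2 x).fun_mul (dS 2 x)) j,
        pd_add ((dS 0 x).fun_mul (dS 0 x)) ((dS 1 x).fun_mul (dS 1 x)) j,
        pd_mul (dS 0 x) (dS 0 x) j, pd_mul (dS 1 x) (dS 1 x) j, pd_mul (dS 2 x) (dS 2 x) j]
    have p3 : ∀ (j : Fin 3) (x : E3), pd j (fun y => 2*(w s y 0 * Bs s y 0) + 2*(w s y 1 * Bs s y 1) + 2*(w s y 2 * Bs s y 2)) x =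
        2 * (pd j (fun y => w s y 0) x * Bs s x 0 + w s x 0 * pd j (fun y => Bs s y 0) x)
        + 2 * (pd j (fun y => w s y 1) x * Bs s x 1 + w s x 1 * pd j (fun y => Bs s y 1) x)
        + 2 * (pd j (fun y => w s y 2) x * Bs s x 2 + w s x 2 * pd j (fun y => Bs s y 2) x) := by
      intro j x
      rw [pd_add ((((dW 0 x).fun_mul (dS 0 x)).const_mul 2).fun_add (((dW 1 x).fun_mul (dS 1 x)).const_mul 2))
          (((dW 2 x).fun_mul (dS 2 x)).const_mul 2) j,
        pd_add (((dW 0 x).fun_mul (dS 0 x)).const_mul 2) (((dW 1 x).fun_mul (dS 1 x)).const_mul 2) j,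
        pd_const_mul 2 ((dW 0 x).fun_mul (dS 0 x)) j, pd_const_mul 2 ((dW 1 x).fun_mul (dS 1 x)) j,
        pd_const_mul 2 ((dW 2 x).fun_mul (dS 2 x)) j,
        pd_mul (dW 0 x) (dS 0 x) j, pd_mul (dW 1 x) (dS 1 x) j, pd_mul (dW 2 x) (dS 2 x) j]
    have ew0 : ∀ x : E3, tderiv w s x 0 + (∑ j : Fin 3, v s x j * pd j (fun y => w s y 0) x) + (∑ j : Fin 3, ecurl (B s) x j * pd j (fun y => Bs s y 0) x) = (∑ j : Fin 3, Bs s x j * pd j (fun y => ecurl (B s) y 0) x) + (∑ j : Fin 3, w s x j * pd j (fun y => v s y 0) x) := fun x => congrArg (fun z : E3 => z 0) (heq1 s hs x)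
    have ew1 : ∀ x : E3, tderiv w s x 1 + (∑ j : Fin 3, v s x j * pd j (fun y => w s y 1) x) + (∑ j : Fin 3, ecurl (B s) x j * pd j (fun y => Bs s y 1) x) = (∑ j : Fin 3, Bs s x j * pd j (fun y => ecurl (B s) y 1) x) + (∑ j : Fin 3, w s x j * pd j (fun y => v s y 1) x) := fun x => congrArg (fun z : E3 => z 1) (heq1 s hs x)
    have ew2 : ∀ x : E3, tderiv w s x 2 + (∑ j : Fin 3, v s x j * pd j (fun y => w s y 2) x) + (∑ j : Fin 3, ecurl (B s) x j * pd j (fun y => Bs s y 2) x) = (∑ j : Fin 3, Bs s x j * pd j (fun y => ecurl (B s) y 2) x) + (∑ j : Fin 3, w s x j * pd j (fun y => v s y 2) x) := fun x => congrArg (fun z : E3 => z 2) (heq1 s hs x)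
    have eb0 : ∀ x : E3, tderiv Bs s x 0 + (∑ j : Fin 3, (v s x j - d * ecurl (B s) x j) * pd j (fun y => Bs s y 0) x) + (∑ j : Fin 3, ecurl (B s) x j * pd j (fun y => w s y 0) x) = -(d * ∑ j : Fin 3, Bs s x j * pd j (fun y => ecurl (B s) y 0) x) + (∑ j : Fin 3, w s x j * pd j (fun y => ecurl (B s) y 0) x) + (∑ j : Fin 3, Bs s x j * pd j (fun y => v s y 0) x) := fun x => congrArg (fun z : E3 => z 0) (heq2 s hs x)
    have eb1 : ∀ x : E3, tderiv Bs s x 1 + (∑ j : Fin 3, (v s x j - d * ecurl (B s) x j) * pd j (fun y => Bs s y 1) x) + (∑ j : Fin 3, ecurl (B s) x j * pd j (fun y => w s y 1) x) = -(d * ∑ j : Fin 3, Bs s x j * pd j (fun y => ecurl (B s) y 1) x) + (∑ j : Fin 3, w s x j * pd j (fun y => ecurl (B s) y 1) x) + (∑ j : Fin 3, Bs s x j * pd j (fun y => v s y 1) x) := fun x => congrArg (fun z : E3 => z 1) (heq2 s hs x)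
    have eb2 : ∀ x : E3, tderiv Bs s x 2 + (∑ j : Fin 3, (v s x j - d * ecurl (B s) x j) * pd j (fun y => Bs s y 2) x) + (∑ j : Fin 3, ecurl (B s) x j * pd j (fun y => w s y 2) x) = -(d * ∑ j : Fin 3, Bs s x j * pd j (fun y => ecurl (B s) y 2) x) + (∑ j : Fin 3, w s x j * pd j (fun y => ecurl (B s) y 2) x) + (∑ j : Fin 3, Bs s x j * pd j (fun y => v s y 2) x) := fun x => congrArg (fun z : E3 => z 2) (heq2 s hs x)
    have hGval : ∀ x : E3, G s x = ((tderiv w s x 0 * w s x 0 + w s x 0 * tderiv w s x 0) + (tderiv w s x 1 * w s x 1 + w s x 1 * tderiv w s x 1) + (tderiv w s x 2 * w s x 2 + w s x 2 * tderiv w s x 2)) + ((tderiv Bs s x 0 * Bs s x 0 + Bs s x 0 * tderiv Bs s x 0) + (tderiv Bs s x 1 * Bs s x 1 + Bs s x 1 * tderiv Bs s x 1) + (tderiv Bs s x 2 * Bs s x 2 + Bs s x 2 * tderiv Bs s x 2)) := by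
      intro x
      have hdw : ∀ k : Fin 3, HasDerivAt (fun u => w u x k) (tderiv w s x k) s := by
        intro k
        have h1 : HasDerivAt (fun u => w u x) (tderiv w s x) s :=
          (((hw.comp (contDiff_id.prodMk contDiff_const)).differentiable (by simp)) s).hasDerivAt
        exact (EuclideanSpace.proj (𝕜 := ℝ) k).hasFDerivAt.comp_hasDerivAt s h1
      have hdb : ∀ k : Fin 3, HasDerivAt (fun u => Bs u x k) (tderiv Bs s x k) s := by
        intro k
        have h1 : HasDerivAt (fun u => Bs u x) (tderiv Bs s x) s :=
          (((hBs.comp (contDiff_id.prodMk contDiff_const)).differentiable (by simp)) s).hasDerivAt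
        exact (EuclideanSpace.proj (𝕜 := ℝ) k).hasFDerivAt.comp_hasDerivAt s h1
      have hchain : HasDerivAt (fun u => Efn w Bs (u, x)) (((tderiv w s x 0 * w s x 0 + w s x 0 * tderiv w s x 0) + (tderiv w s x 1 * w s x 1 + w s x 1 * tderiv w s x 1) + (tderiv w s x 2 * w s x 2 + w s x 2 * tderiv w s x 2)) + ((tderiv Bs s x 0 * Bs s x 0 + Bs s x 0 * tderiv Bs s x 0) + (tderiv Bs s x 1 * Bs s x 1 + Bs s x 1 * tderiv Bs s x 1) + (tderiv Bs s x 2 * Bs s x 2 + Bs s x 2 * tderiv Bs s x 2))) s :=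
        ((((hdw 0).mul (hdw 0)).add ((hdw 1).mul (hdw 1))).add ((hdw 2).mul (hdw 2))).add
          ((((hdb 0).mul (hdb 0)).add ((hdb 1).mul (hdb 1))).add ((hdb 2).mul (hdb 2)))
      exact (hGd s x).unique hchain
    have z1 : ∀ y : E3, R ≤ ‖y‖ → (fun y => w s y 0 * w s y 0 + w s y 1 * w s y 1 + w s y 2 * w s y 2) y = 0 := by
      intro y hy
      have h1 := (hsupp s y hy).2.1
      simp only [h1]
      norm_num
    have z2 : ∀ y : E3, R ≤ ‖y‖ → (fun y => Bs s y 0 * Bs s y 0 + Bs s y 1 * Bs s y 1 + Bs s y 2 * Bs s y 2) y = 0 := by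
      intro y hy
      have h1 := (hsupp s y hy).2.2.2
      simp only [h1]
      norm_num
    have z3 : ∀ y : E3, R ≤ ‖y‖ → (fun y => 2*(w s y 0 * Bs s y 0) + 2*(w s y 1 * Bs s y 1) + 2*(w s y 2 * Bs s y 2)) y = 0 := by
      intro y hy
      have h1 := (hsupp s y hy).2.1
      simp only [h1]
      norm_num
    set Pq : E3 → ℝ := fun x => -(∑ j : Fin 3, v s x j * pd j (fun y => w s y 0 * w s y 0 + w s y 1 * w s y 1 + w s y 2 * w s y 2) x) - (∑ j : Fin 3, (v s x j - d * ecurl (B s) x j) * pd j (fun y => Bs s y 0 * Bs s y 0 + Bs s y 1 * Bs s y 1 + Bs s y 2 * Bs s y 2) x) - (∑ j : Fin 3, ecurl (B s) x j * pd j (fun y => 2*(w s y 0 * Bs s y 0) + 2*(w s y 1 * Bs s y 1) + 2*(w s y 2 * Bs s y 2)) x) with hPdef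
    set Qq : E3 → ℝ := fun x => 2*(∑ k : Fin 3, w s x k * ∑ j : Fin 3, Bs s x j * pd j (fun y => ecurl (B s) y k) x) + 2*(∑ k : Fin 3, w s x k * ∑ j : Fin 3, w s x j * pd j (fun y => v s y k) x) - 2*d*(∑ k : Fin 3, Bs s x k * ∑ j : Fin 3, Bs s x j * pd j (fun y => ecurl (B s) y k) x) + 2*(∑ k : Fin 3, Bs s x k * ∑ j : Fin 3, w s x j * pd j (fun y => ecurl (B s) y k) x) + 2*(∑ k : Fin 3, Bs s x k * ∑ j : Fin 3, Bs s x j * pd j (fun y => v s y k) x) with hQdef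
    have hsplit : ∀ x : E3, G s x = Pq x + Qq x := by
      intro x
      rw [hGval x]
      simp only [hPdef, hQdef, Fin.sum_univ_three]
      rw [p1 0 x, p1 1 x, p1 2 x, p2 0 x, p2 1 x, p2 2 x, p3 0 x, p3 1 x, p3 2 x]
      have h1 := ew0 x; have h2 := ew1 x; have h3 := ew2 x
      have h4 := eb0 x; have h5 := eb1 x; have h6 := eb2 x
      simp only [Fin.sum_univ_three] at h1 h2 h3 h4 h5 h6
      linear_combination (2 * w s x 0) * h1 + (2 * w s x 1) * h2 + (2 * w s x 2) * h3
        + (2 * Bs s x 0) * h4 + (2 * Bs s x 1) * h5 + (2 * Bs s x 2) * h6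
    -- integrability of the transport terms
    have cT1 : Continuous (fun x : E3 => ∑ j : Fin 3, v s x j * pd j (fun y => w s y 0 * w s y 0 + w s y 1 * w s y 1 + w s y 2 * w s y 2) x) :=
      continuous_finset_sum _ (fun j _ => ((hvk s j).continuous).mul (contDiff_pd hphi1 j).continuous)
    have cT2 : Continuous (fun x : E3 => ∑ j : Fin 3, (v s x j - d * ecurl (B s) x j) * pd j (fun y => Bs s y 0 * Bs s y 0 + Bs s y 1 * Bs s y 1 + Bs s y 2 * Bs s y 2) x) :=
      continuous_finset_sum _ (fun j _ => (((hvk s j).continuous).sub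
        (continuous_const.mul (hcBk s j).continuous)).mul (contDiff_pd hphi2 j).continuous)
    have cT3 : Continuous (fun x : E3 => ∑ j : Fin 3, ecurl (B s) x j * pd j (fun y => 2*(w s y 0 * Bs s y 0) + 2*(w s y 1 * Bs s y 1) + 2*(w s y 2 * Bs s y 2)) x) :=
      continuous_finset_sum _ (fun j _ => ((hcBk s j).continuous).mul (contDiff_pd hphi3 j).continuous)
    have sT1 : HasCompactSupport (fun x : E3 => ∑ j : Fin 3, v s x j * pd j (fun y => w s y 0 * w s y 0 + w s y 1 * w s y 1 + w s y 2 * w s y 2) x) := by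
      refine HasCompactSupport.intro (isCompact_closedBall (0:E3) R) (fun x hx => ?_)
      have hxR : R < ‖x‖ := by simpa [Metric.mem_closedBall, dist_zero_right] using hx
      refine Finset.sum_eq_zero (fun j _ => ?_)
      rw [pd_zero_of_zero_nhds z1 j hxR, mul_zero]
    have sT2 : HasCompactSupport (fun x : E3 => ∑ j : Fin 3, (v s x j - d * ecurl (B s) x j) * pd j (fun y => Bs s y 0 * Bs s y 0 + Bs s y 1 * Bs s y 1 + Bs s y 2 * Bs s y 2) x) := by
      refine HasCompactSupport.intro (isCompact_closedBall (0:E3) R) (fun x hx => ?_)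
      have hxR : R < ‖x‖ := by simpa [Metric.mem_closedBall, dist_zero_right] using hx
      refine Finset.sum_eq_zero (fun j _ => ?_)
      rw [pd_zero_of_zero_nhds z2 j hxR, mul_zero]
    have sT3 : HasCompactSupport (fun x : E3 => ∑ j : Fin 3, ecurl (B s) x j * pd j (fun y => 2*(w s y 0 * Bs s y 0) + 2*(w s y 1 * Bs s y 1) + 2*(w s y 2 * Bs s y 2)) x) := by
      refine HasCompactSupport.intro (isCompact_closedBall (0:E3) R) (fun x hx => ?_)
      have hxR : R < ‖x‖ := by simpa [Metric.mem_closedBall, dist_zero_right] using hx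
      refine Finset.sum_eq_zero (fun j _ => ?_)
      rw [pd_zero_of_zero_nhds z3 j hxR, mul_zero]
    have iT1 := cT1.integrable_of_hasCompactSupport (μ := volume) sT1
    have iT2 := cT2.integrable_of_hasCompactSupport (μ := volume) sT2
    have iT3 := cT3.integrable_of_hasCompactSupport (μ := volume) sT3
    have hPint : Integrable Pq := by
      simp only [hPdef]
      exact (iT1.neg.sub iT2).sub iT3
    have hQcont : Continuous Qq := by
      have c1 := continuous_triSum (fun k => hwk s k) (fun k => hBsk s k) (fun k => hcBk s k)
      have c2 := continuous_triSum (fun k => hwk s k) (fun k => hwk s k) (fun k => hvk s k)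
      have c3 := continuous_triSum (fun k => hBsk s k) (fun k => hBsk s k) (fun k => hcBk s k)
      have c4 := continuous_triSum (fun k => hBsk s k) (fun k => hwk s k) (fun k => hcBk s k)
      have c5 := continuous_triSum (fun k => hBsk s k) (fun k => hBsk s k) (fun k => hvk s k)
      simp only [hQdef]
      exact ((((continuous_const.mul c1).add (continuous_const.mul c2)).sub
        (continuous_const.mul c3)).add (continuous_const.mul c4)).add (continuous_const.mul c5)
    have hQsupp : HasCompactSupport Qq := by
      refine hasCompactSupport_of_ball (R := R) (fun y hy => ?_)
      have h1 := (hsupp s y hy).2.1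
      have h2 := (hsupp s y hy).2.2.2
      simp only [hQdef, h1, h2]
      simp [Fin.sum_univ_three]
    have hQint : Integrable Qq := hQcont.integrable_of_hasCompactSupport hQsupp
    -- divergence-free facts and vanishing of transport integrals
    have hdiv2 : ∀ x : E3, ediv (fun y => v s y - d • ecurl (B s) y) x = 0 := by
      intro x
      have e0 : pd 0 (fun y => (v s y - d • ecurl (B s) y) 0) x
          = pd 0 (fun y => v s y 0) x - pd 0 (fun y => d * ecurl (B s) y 0) x :=
        pd_sub ((hvk s 0).differentiable (by simp) x)
          ((contDiff_const.mul (hcBk s 0)).differentiable (by simp) x) 0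
      have e1 : pd 1 (fun y => (v s y - d • ecurl (B s) y) 1) x
          = pd 1 (fun y => v s y 1) x - pd 1 (fun y => d * ecurl (B s) y 1) x :=
        pd_sub ((hvk s 1).differentiable (by simp) x)
          ((contDiff_const.mul (hcBk s 1)).differentiable (by simp) x) 1
      have e2 : pd 2 (fun y => (v s y - d • ecurl (B s) y) 2) x
          = pd 2 (fun y => v s y 2) x - pd 2 (fun y => d * ecurl (B s) y 2) x :=
        pd_sub ((hvk s 2).differentiable (by simp) x)
          ((contDiff_const.mul (hcBk s 2)).differentiable (by simp) x) 2
      have e0' : pd 0 (fun y => d * ecurl (B s) y 0) x = d * pd 0 (fun y => ecurl (B s) y 0) x :=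
        pd_const_mul d ((hcBk s 0).differentiable (by simp) x) 0
      have e1' : pd 1 (fun y => d * ecurl (B s) y 1) x = d * pd 1 (fun y => ecurl (B s) y 1) x :=
        pd_const_mul d ((hcBk s 1).differentiable (by simp) x) 1
      have e2' : pd 2 (fun y => d * ecurl (B s) y 2) x = d * pd 2 (fun y => ecurl (B s) y 2) x :=
        pd_const_mul d ((hcBk s 2).differentiable (by simp) x) 2
      have hdv := hdivv s hs x
      have hdc := ediv_ecurl_eq_zero (fun k => hBk s k) x
      simp only [ediv] at hdv hdc ⊢
      rw [e0, e1, e2, e0', e1', e2']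
      linear_combination hdv - d * hdc
    have i1 : (∫ x : E3, (∑ j : Fin 3, v s x j * pd j (fun y => w s y 0 * w s y 0 + w s y 1 * w s y 1 + w s y 2 * w s y 2) x)) = 0 :=
      integral_div_free (fun k => hvk s k) hphi1 z1 (hdivv s hs)
    have i2 : (∫ x : E3, (∑ j : Fin 3, (v s x j - d * ecurl (B s) x j) * pd j (fun y => Bs s y 0 * Bs s y 0 + Bs s y 1 * Bs s y 1 + Bs s y 2 * Bs s y 2) x)) = 0 := by
      have h := integral_div_free (g := fun y => v s y - d • ecurl (B s) y)
        (fun k => (hvk s k).sub (contDiff_const.mul (hcBk s k))) hphi2 z2 hdiv2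
      exact h
    have i3 : (∫ x : E3, (∑ j : Fin 3, ecurl (B s) x j * pd j (fun y => 2*(w s y 0 * Bs s y 0) + 2*(w s y 1 * Bs s y 1) + 2*(w s y 2 * Bs s y 2)) x)) = 0 :=
      integral_div_free (fun k => hcBk s k) hphi3 z3 (ediv_ecurl_eq_zero (fun k => hBk s k))
    have hPzero : (∫ x : E3, Pq x) = 0 := by
      have iN1 : Integrable (fun x : E3 => -(∑ j : Fin 3, v s x j * pd j (fun y => w s y 0 * w s y 0 + w s y 1 * w s y 1 + w s y 2 * w s y 2) x)) volume := iT1.neg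
      have iN2 : Integrable (fun x : E3 => -(∑ j : Fin 3, v s x j * pd j (fun y => w s y 0 * w s y 0 + w s y 1 * w s y 1 + w s y 2 * w s y 2) x) - (∑ j : Fin 3, (v s x j - d * ecurl (B s) x j) * pd j (fun y => Bs s y 0 * Bs s y 0 + Bs s y 1 * Bs s y 1 + Bs s y 2 * Bs s y 2) x)) volume := iN1.sub iT2
      simp only [hPdef]
      rw [integral_sub iN2 iT3, integral_sub iN1 iT2, integral_neg, i1, i2, i3]
      ring
    -- pointwise bound on Qq
    have hQb : ∀ x : E3, Qq x ≤ K * Efn w Bs (s, x) := by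
      intro x
      obtain ⟨hbw, hbb, hbp⟩ := hbd s hs x
      have hpv : ∀ i j : Fin 3, |pd i (fun y => v s y j) x| ≤ M := fun i j => (hbp i j).1
      have hpc : ∀ i j : Fin 3, |pd i (fun y => ecurl (B s) y j) x| ≤ M := fun i j => (hbp i j).2
      have t1 := tri_bound hM.le (w s x) (Bs s x) (ecurl (B s)) x hpc
      have t2 := tri_bound hM.le (w s x) (w s x) (v s) x hpv
      have t3 := tri_bound hM.le (Bs s x) (Bs s x) (ecurl (B s)) x hpc
      have t4 := tri_bound hM.le (Bs s x) (w s x) (ecurl (B s)) x hpc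
      have t5 := tri_bound hM.le (Bs s x) (Bs s x) (v s) x hpv
      have hnw : (0:ℝ) ≤ (w s x 0 * w s x 0 + w s x 1 * w s x 1 + w s x 2 * w s x 2) 
        := add_nonneg (add_nonneg (mul_self_nonneg _) (mul_self_nonneg _)) (mul_self_nonneg _)
      have hnb : (0:ℝ) ≤ (Bs s x 0 * Bs s x 0 + Bs s x 1 * Bs s x 1 + Bs s x 2 * Bs s x 2) 
        := add_nonneg (add_nonneg (mul_self_nonneg _) (mul_self_nonneg _)) (mul_self_nonneg _)
      have sl1 : (0:ℝ) ≤ M * (w s x 0 * w s x 0 + w s x 1 * w s x 1 + w s x 2 * w s x 2) := mul_nonneg hM.le hnw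
      have sl2 : (0:ℝ) ≤ M * (Bs s x 0 * Bs s x 0 + Bs s x 1 * Bs s x 1 + Bs s x 2 * Bs s x 2) := mul_nonneg hM.le hnb
      have sl3 : (0:ℝ) ≤ d * (M * (w s x 0 * w s x 0 + w s x 1 * w s x 1 + w s x 2 * w s x 2)) := mul_nonneg hd sl1
      have sl4 : (0:ℝ) ≤ d * (M * (Bs s x 0 * Bs s x 0 + Bs s x 1 * Bs s x 1 + Bs s x 2 * Bs s x 2)) := mul_nonneg hd sl2
      have h3' := mul_le_mul_of_nonneg_left (neg_le_neg ((abs_le.1 t3).1))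
        (by linarith : (0:ℝ) ≤ 2*d)
      have hEeq : Efn w Bs (s, x) = (w s x 0 * w s x 0 + w s x 1 * w s x 1 + w s x 2 * w s x 2) + (Bs s x 0 * Bs s x 0 + Bs s x 1 * Bs s x 1 + Bs s x 2 * Bs s x 2) := rfl
      simp only [hQdef]
      rw [hEeq, hK]
      linarith [(abs_le.1 t1).2, (abs_le.1 t2).2, (abs_le.1 t4).2, (abs_le.1 t5).2, h3']
    calc (∫ x : E3, G s x) = ∫ x : E3, (Pq x + Qq x) :=
          integral_congr_ae (Filter.Eventually.of_forall hsplit)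
      _ = (∫ x : E3, Pq x) + ∫ x : E3, Qq x := integral_add hPint hQint
      _ = ∫ x : E3, Qq x := by rw [hPzero, zero_add]
      _ ≤ ∫ x : E3, K * Efn w Bs (s, x) := integral_mono hQint ((hEint s).const_mul K) hQb
      _ = K * Fn s := integral_const_mul K _
  -- Gronwall argument
  have hFdiff : Differentiable ℝ Fn := fun s => (hFd s).differentiableAt
  have hHd : ∀ s : ℝ, HasDerivAt (fun u => Fn u * Real.exp (-K * u))
      ((∫ x : E3, G s x) * Real.exp (-K * s) + Fn s * (Real.exp (-K * s) * (-K))) s := by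
    intro s
    have he : HasDerivAt (fun u : ℝ => Real.exp (-K * u)) (Real.exp (-K * s) * (-K)) s := by
      simpa using (((hasDerivAt_id s).const_mul (-K)).exp)
    exact (hFd s).mul he
  have hmono : AntitoneOn (fun u => Fn u * Real.exp (-K * u)) (Set.Icc 0 T) := by
    apply antitoneOn_of_deriv_nonpos (convex_Icc 0 T)
    · exact ((hFdiff.continuous).mul (Real.continuous_exp.comp (continuous_const.mul
        continuous_id))).continuousOn
    · intro s _
      exact (hHd s).differentiableAt.differentiableWithinAt
    · intro s hs
      rw [interior_Icc] at hs
      rw [(hHd s).deriv]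
      have h1 := hkey s ⟨hs.1.le, hs.2.le⟩
      have h2 : (0:ℝ) < Real.exp (-K * s) := Real.exp_pos _
      nlinarith [mul_le_mul_of_nonneg_right h1 h2.le]
  have hHt := hmono (Set.left_mem_Icc.2 hT.le) ht ht.1
  have hfin : Fn t ≤ Real.exp (K * t) * Fn 0 := by
    have e1 : Real.exp (-K * t) * Real.exp (K * t) = 1 := by
      rw [← Real.exp_add]
      norm_num
    have h2 : (0:ℝ) < Real.exp (K * t) := Real.exp_pos _
    have h3 : Fn t * Real.exp (-K * t) ≤ Fn 0 := by simpa using hHt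
    calc Fn t = (Fn t * Real.exp (-K * t)) * Real.exp (K * t) := by
          rw [mul_assoc, e1, mul_one]
      _ ≤ Fn 0 * Real.exp (K * t) := mul_le_mul_of_nonneg_right h3 h2.le
      _ = Real.exp (K * t) * Fn 0 := mul_comm _ _
  simp only [hnorm]
  calc (∫ x : E3, Efn w Bs (t, x)) = Fn t := rfl
    _ ≤ Real.exp (K * t) * Fn 0 := hfin
    _ = Real.exp (100 * (1 + d) * M * t) * ∫ x : E3, Efn w Bs (0, x) := by rw [hK]
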